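/- arXiv:1601.00487 — 7 statements merged into one kernel-verified Lean document; each statement's English description precedes it below -/
import Mathlib

section
/- Let D be a dimension function satisfying the regularized Boltzmann entropy hypothesis with S̃ strictly increasing in each coordinate, and let a, a' ∈ ℝ^{L+1} with a > 0 and a' > 0. Then S̃ a ≤ S̃ a' if and only if for every δ ∈ Δ there exists δ' ∈ Δ such that D_{a,δ}(X) ≤ D_{a',δ'}(X) for all sufficiently large X. (This dimension-dominance condition is exactly the majorization π^{(X)}_{a,δ_X} ≺_M π^{(X)}_{a',δ'_X} of the microcanonical states, i.e., the macroscopic adiabatic accessibility a ≺_ad a' of Theorem 1 of the paper.) -/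
open Filter Topology

/-- A dimension function: `D X b ≥ 1` for `X ≥ 1`, and monotone in `b` coordinatewise. -/
def IsDimFun (L : ℕ) (D : ℕ → (Fin (L + 1) → ℝ) → ℕ) : Prop :=
  (∀ X : ℕ, 1 ≤ X → ∀ b : Fin (L + 1) → ℝ, 1 ≤ D X b) ∧
  (∀ X : ℕ, ∀ b c : Fin (L + 1) → ℝ, (∀ i, b i ≤ c i) → D X b ≤ D X c)

/-- Membership in `Δ`: a positive sequence tending to `0`. -/
def IsDelta (δ : ℕ → ℝ) : Prop :=
  (∀ X : ℕ, 0 < δ X) ∧ Tendsto δ atTop (nhds 0)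

/-- The shell dimension `D_{a,δ}(X)`. -/
def shellDim (L : ℕ) (D : ℕ → (Fin (L + 1) → ℝ) → ℕ) (a : Fin (L + 1) → ℝ)
    (δ : ℕ → ℝ) (X : ℕ) : ℕ :=
  D X (fun i => (1 + δ X) * a i) - D X (fun i => (1 - δ X) * a i)

/-- The regularized Boltzmann entropy hypothesis: `S` is continuous and
`(1/X) log (D X b) → S b` for every `b > 0`. -/
def RegBoltz (L : ℕ) (D : ℕ → (Fin (L + 1) → ℝ) → ℕ) (S : (Fin (L + 1) → ℝ) → ℝ) : Prop :=
  Continuous S ∧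
  ∀ b : Fin (L + 1) → ℝ, (∀ i, 0 < b i) →
    Tendsto (fun X : ℕ => Real.log (D X b) / X) atTop (nhds (S b))

/-- `S` is strictly increasing in each coordinate on the positive orthant. -/
def StrictInc (L : ℕ) (S : (Fin (L + 1) → ℝ) → ℝ) : Prop :=
  ∀ b c : Fin (L + 1) → ℝ, (∀ i, 0 < b i) → (∀ i, 0 < c i) →
    (∀ i, b i ≤ c i) → b ≠ c → S b < S c

/-- `S̄(a)`: sup over `δ ∈ Δ` of the limsup of `(1/X) log D_{a,δ}(X)`, in the extended reals. -/
noncomputable def SbarSup (L : ℕ) (D : ℕ → (Fin (L + 1) → ℝ) → ℕ) (a : Fin (L + 1) → ℝ) : EReal :=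
  ⨆ δ : {δ : ℕ → ℝ // IsDelta δ},
    Filter.limsup (fun X : ℕ => ((Real.log (shellDim L D a δ.1 X) / X : ℝ) : EReal)) atTop

/-- `S̲(a)`: sup over `δ ∈ Δ` of the liminf of `(1/X) log D_{a,δ}(X)`, in the extended reals. -/
noncomputable def SbarInf (L : ℕ) (D : ℕ → (Fin (L + 1) → ℝ) → ℕ) (a : Fin (L + 1) → ℝ) : EReal :=
  ⨆ δ : {δ : ℕ → ℝ // IsDelta δ},
    Filter.liminf (fun X : ℕ => ((Real.log (shellDim L D a δ.1 X) / X : ℝ) : EReal)) atTop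

/-- Total variation distance between the distribution `q` on `ℕ` and the uniform
distribution on `{0, …, d-1}`. -/
noncomputable def TVu (q : ℕ → ℝ) (d : ℕ) : ℝ :=
  (1 / 2) * (∑ i ∈ Finset.range d, |q i - 1 / (d : ℝ)|) + (1 / 2) * (∑' i : ℕ, q (i + d))

/-!
Since `D_X(b) ≈ exp (X S(b))`, a strict gap `S b < S c` makes `D_X(c)` eventually exceed any
multiple of `D_X(b)`; in particular `D_X((1 - ε) b) ≤ D_X((1 + ε) b) / 2`, so the `ε`-shell holds
at least half of the ball `(1 + ε) b`. If `S a ≤ S a'`, continuity gives `η > 0` with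
`S ((1 + η) a) < S ((1 + ε) a')`, hence the `ε`-shell around `a'` eventually outgrows the whole
ball `(1 + δ_X) a`. If `S a' < S a`, a shell around `a` with `δ_X → 0` slowly enough holds half of
`D_X(a)`, which eventually beats every shell around `a'` with `δ'_X → 0`. In both directions the
fixed `ε` is sent to `0` along a diagonal of the resulting eventual statements.
-/

theorem exists_tendsto_atTop_eventually_diag {P : ℕ → ℕ → Prop}
    (h : ∀ n, ∀ᶠ X in atTop, P n X) :
    ∃ f : ℕ → ℕ, Tendsto f atTop atTop ∧ ∀ᶠ X in atTop, P (f X) X := by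
  choose N hN using fun n => eventually_atTop.mp (h n)
  let M : ℕ → ℕ := fun n => N n + n
  refine ⟨fun X => Nat.findGreatest (fun n => M n ≤ X) X, ?_, ?_⟩
  · refine tendsto_atTop_atTop.2 fun K => ⟨M K, fun X hX => ?_⟩
    exact Nat.le_findGreatest ((Nat.le_add_left K _).trans hX) hX
  · refine eventually_atTop.2 ⟨M 0, fun X hX => hN _ X ?_⟩
    have := Nat.findGreatest_spec (P := fun n => M n ≤ X) (Nat.zero_le X) hX
    exact (Nat.le_add_right _ _).trans this

theorem exists_isDelta_eventually {P : ℝ → ℕ → Prop}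
    (h : ∀ ε ∈ Set.Ioo (0 : ℝ) 1, ∀ᶠ X in atTop, P ε X) :
    ∃ δ : ℕ → ℝ, IsDelta δ ∧ ∀ᶠ X in atTop, P (δ X) X := by
  obtain ⟨u, -, hu, hu0⟩ := exists_seq_strictAnti_tendsto' (zero_lt_one' ℝ)
  obtain ⟨f, hf, hP⟩ := exists_tendsto_atTop_eventually_diag fun n => h (u n) (hu n)
  exact ⟨u ∘ f, ⟨fun X => (hu (f X)).1, hu0.comp hf⟩, hP⟩

theorem eventually_mul_le_of_tendsto_log_div {u v : ℕ → ℝ} {s t : ℝ}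
    (hu : ∀ᶠ X in atTop, 0 < u X) (hv : ∀ᶠ X in atTop, 0 < v X)
    (hus : Tendsto (fun X : ℕ => Real.log (u X) / X) atTop (𝓝 s))
    (hvt : Tendsto (fun X : ℕ => Real.log (v X) / X) atTop (𝓝 t)) (hst : s < t) (C : ℝ) :
    ∀ᶠ X in atTop, C * u X ≤ v X := by
  have hgap : Tendsto (fun X : ℕ => Real.log (v X) - Real.log (u X)) atTop atTop := by
    refine (tendsto_natCast_atTop_atTop.atTop_mul_pos (sub_pos.2 hst) (hvt.sub hus)).congr' ?_
    filter_upwards [eventually_ne_atTop 0] with X hX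
    field_simp
  filter_upwards [hu, hv, hgap.eventually_ge_atTop (Real.log C)] with X hu hv hlog
  rcases le_or_gt C 0 with hC | hC
  · nlinarith
  · rw [← Real.log_div hv.ne' hu.ne', Real.log_le_log_iff hC (div_pos hv hu)] at hlog
    exact (le_div_iff₀ hu).mp hlog

theorem exists_pos_scale_lt {ι : Type*} {S : (ι → ℝ) → ℝ} (hS : Continuous S) {b : ι → ℝ}
    {s : ℝ} (h : S b < s) : ∃ η > 0, S (fun i => (1 + η) * b i) < s := by
  have hcont : Continuous fun t : ℝ => S (fun i => (1 + t) * b i) := by fun_prop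
  have hlt : ∀ᶠ t in 𝓝 (0 : ℝ), S (fun i => (1 + t) * b i) < s :=
    (hcont.tendsto' 0 (S b) (by simp)).eventually_lt_const h
  obtain ⟨η, hη, hηpos⟩ := ((hlt.filter_mono nhdsWithin_le_nhds).and
    (self_mem_nhdsWithin : Set.Ioi (0 : ℝ) ∈ 𝓝[>] 0)).exists
  exact ⟨η, hηpos, hη⟩

section DimFun

variable {L : ℕ} {D : ℕ → (Fin (L + 1) → ℝ) → ℕ} {S : (Fin (L + 1) → ℝ) → ℝ}

theorem StrictInc.scale_lt_scale (hSI : StrictInc L S) {a : Fin (L + 1) → ℝ}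
    (ha : ∀ i, 0 < a i) {s t : ℝ} (hs : 0 < s) (hst : s < t) :
    S (fun i => s * a i) < S (fun i => t * a i) := by
  refine hSI _ _ (fun i => mul_pos hs (ha i)) (fun i => mul_pos (hs.trans hst) (ha i))
    (fun i => mul_le_mul_of_nonneg_right hst.le (ha i).le) fun h => ?_
  have := congrFun h 0
  nlinarith [ha 0]

theorem IsDimFun.scale_mono (hD : IsDimFun L D) (X : ℕ) {a : Fin (L + 1) → ℝ}
    (ha : ∀ i, 0 ≤ a i) {s t : ℝ} (hst : s ≤ t) :
    D X (fun i => s * a i) ≤ D X (fun i => t * a i) :=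
  hD.2 X _ _ fun i => mul_le_mul_of_nonneg_right hst (ha i)

theorem eventually_mul_le_of_lt (hD : IsDimFun L D) (hS : RegBoltz L D S)
    {b c : Fin (L + 1) → ℝ} (hb : ∀ i, 0 < b i) (hc : ∀ i, 0 < c i) (hlt : S b < S c) (C : ℕ) :
    ∀ᶠ X in atTop, C * D X b ≤ D X c := by
  have hpos : ∀ b, ∀ᶠ X in atTop, (0 : ℝ) < D X b := fun b =>
    (eventually_ge_atTop 1).mono fun X hX => by exact_mod_cast hD.1 X hX b
  filter_upwards [eventually_mul_le_of_tendsto_log_div (hpos b) (hpos c) (hS.2 b hb) (hS.2 c hc)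
    hlt C] with X hX
  exact_mod_cast hX

theorem le_two_mul_shellDim {a : Fin (L + 1) → ℝ} {δ : ℕ → ℝ} {X : ℕ}
    (h : 2 * D X (fun i => (1 - δ X) * a i) ≤ D X (fun i => (1 + δ X) * a i)) :
    D X (fun i => (1 + δ X) * a i) ≤ 2 * shellDim L D a δ X := by
  unfold shellDim
  omega

theorem eventually_two_mul_scale_le_scale (hD : IsDimFun L D) (hS : RegBoltz L D S)
    (hSI : StrictInc L S) {a : Fin (L + 1) → ℝ} (ha : ∀ i, 0 < a i) {ε : ℝ}
    (hε : ε ∈ Set.Ioo (0 : ℝ) 1) :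
    ∀ᶠ X in atTop, 2 * D X (fun i => (1 - ε) * a i) ≤ D X (fun i => (1 + ε) * a i) :=
  have hε₀ : 0 < 1 - ε := by linarith [hε.2]
  eventually_mul_le_of_lt hD hS (fun i => mul_pos hε₀ (ha i))
    (fun i => mul_pos (by linarith [hε.1]) (ha i))
    (hSI.scale_lt_scale ha hε₀ (by linarith [hε.1])) 2

theorem exists_shellDim_le_of_le (hD : IsDimFun L D) (hS : RegBoltz L D S)
    (hSI : StrictInc L S) {a a' : Fin (L + 1) → ℝ} (ha : ∀ i, 0 < a i) (ha' : ∀ i, 0 < a' i)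
    (hle : S a ≤ S a') {δ : ℕ → ℝ} (hδ : IsDelta δ) :
    ∃ δ' : ℕ → ℝ, IsDelta δ' ∧ ∀ᶠ X in atTop, shellDim L D a δ X ≤ shellDim L D a' δ' X := by
  refine exists_isDelta_eventually (P := fun ε X => shellDim L D a δ X ≤
    shellDim L D a' (fun _ => ε) X) fun ε hε => ?_
  have hε₁ : 0 < 1 + ε := by linarith [hε.1]
  have hlt : S a' < S (fun i => (1 + ε) * a' i) := by
    simpa using hSI.scale_lt_scale ha' one_pos (by linarith [hε.1])
  obtain ⟨η, hη, hηlt⟩ := exists_pos_scale_lt hS.1 (hle.trans_lt hlt)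
  filter_upwards [hδ.2.eventually_lt_const hη,
    eventually_mul_le_of_lt hD hS (fun i => mul_pos (by linarith) (ha i))
      (fun i => mul_pos hε₁ (ha' i)) hηlt 2,
    eventually_two_mul_scale_le_scale hD hS hSI ha' hε] with X hδη hball hinner
  have hshell : shellDim L D a δ X ≤ D X (fun i => (1 + η) * a i) :=
    (Nat.sub_le _ _).trans (hD.scale_mono X (fun i => (ha i).le) (by linarith))
  have := le_two_mul_shellDim (δ := fun _ => ε) hinner
  omega

theorem le_of_forall_exists_shellDim_le (hD : IsDimFun L D) (hS : RegBoltz L D S)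
    (hSI : StrictInc L S) {a a' : Fin (L + 1) → ℝ} (ha : ∀ i, 0 < a i) (ha' : ∀ i, 0 < a' i)
    (H : ∀ δ : ℕ → ℝ, IsDelta δ → ∃ δ' : ℕ → ℝ, IsDelta δ' ∧
      ∀ᶠ X in atTop, shellDim L D a δ X ≤ shellDim L D a' δ' X) :
    S a ≤ S a' := by
  by_contra! hlt
  obtain ⟨η, hη, hηlt⟩ := exists_pos_scale_lt hS.1 hlt
  obtain ⟨δ, hδ, hinner⟩ := exists_isDelta_eventually (P := fun ε X =>
    2 * D X (fun i => (1 - ε) * a i) ≤ D X (fun i => (1 + ε) * a i))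
    fun ε hε => eventually_two_mul_scale_le_scale hD hS hSI ha hε
  obtain ⟨δ', hδ', hdom⟩ := H δ hδ
  -- the `δ`-shell around `a` holds half of `D_X(a)`, which is eventually `≥ 3 D_X((1 + η) a')`
  have hfalse : ∀ᶠ X : ℕ in atTop, False := by
    filter_upwards [hinner, hdom, hδ'.2.eventually_lt_const hη, eventually_ge_atTop 1,
      eventually_mul_le_of_lt hD hS (fun i => mul_pos (by linarith) (ha' i)) ha hηlt 3]
      with X hinner hdom hδ'η hX hball
    have h1 : D X a ≤ D X (fun i => (1 + δ X) * a i) := by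
      simpa using hD.scale_mono X (fun i => (ha i).le) (by linarith [hδ.1 X] : 1 ≤ 1 + δ X)
    have h2 : shellDim L D a' δ' X ≤ D X (fun i => (1 + η) * a' i) :=
      (Nat.sub_le _ _).trans (hD.scale_mono X (fun i => (ha' i).le) (by linarith))
    have := le_two_mul_shellDim hinner
    have := hD.1 X hX (fun i => (1 + η) * a' i)
    omega
  exact hfalse.exists.elim fun _ h => h

end DimFun

/-- Theorem 1 of the paper: the regularized Boltzmann entropy determines
macroscopic adiabatic accessibility (expressed via shell-dimension dominance). -/
theorem stmt_0 {L : ℕ} (D : ℕ → (Fin (L + 1) → ℝ) → ℕ) (S : (Fin (L + 1) → ℝ) → ℝ)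
    (hD : IsDimFun L D) (hS : RegBoltz L D S) (hSI : StrictInc L S)
    (a a' : Fin (L + 1) → ℝ) (ha : ∀ i, 0 < a i) (ha' : ∀ i, 0 < a' i) :
    S a ≤ S a' ↔
      ∀ δ : ℕ → ℝ, IsDelta δ → ∃ δ' : ℕ → ℝ, IsDelta δ' ∧
        ∃ X₀ : ℕ, ∀ X ≥ X₀, shellDim L D a δ X ≤ shellDim L D a' δ' X := by
  constructor
  · intro hle δ hδ
    obtain ⟨δ', hδ', hdom⟩ := exists_shellDim_le_of_le hD hS hSI ha ha' hle hδ
    exact ⟨δ', hδ', eventually_atTop.mp hdom⟩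
  · intro H
    refine le_of_forall_exists_shellDim_le hD hS hSI ha ha' fun δ hδ => ?_
    obtain ⟨δ', hδ', hdom⟩ := H δ hδ
    exact ⟨δ', hδ', eventually_atTop.mpr hdom⟩
end

section
/- Let D be a dimension function satisfying the regularized Boltzmann entropy hypothesis with S̃ strictly increasing in each coordinate, and let a, a' ∈ ℝ^{L+1} with a > 0 and a' > 0. If S̃ a = S̃ a', then for every δ ∈ Δ there exists δ' ∈ Δ such that D_{a,δ}(X) < D_{a',δ'}(X) for all sufficiently large X. -/
open Filter Topology

/-!
Fix `c ∈ (0, 1)`. Strict monotonicity and `S̃ a = S̃ a'` give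
`S̃((1 - c) a') < S̃ a' = S̃ a < S̃((1 + c) a')`, and by continuity also
`S̃((1 + ε) a) < S̃((1 + c) a')` for some `ε > 0`. Since `δ X → 0`, the `a`-shell is eventually
contained in `D X ((1 + ε) a)`, and comparing exponential growth rates shows that
`D X ((1 + ε) a) + D X ((1 - c) a')` is eventually smaller than `D X ((1 + c) a')`:
the `a`-shell is eventually smaller than the `a'`-shell of fixed width `c`.
Letting `c` tend to `0` slowly enough along `X` (a diagonal choice) produces `δ'`.
-/

open Real

theorem exists_tendsto_atTop_eventually_of_forall_eventually {P : ℕ → ℕ → Prop}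
    (h : ∀ n, ∀ᶠ X in atTop, P n X) :
    ∃ g : ℕ → ℕ, Tendsto g atTop atTop ∧ ∀ᶠ X in atTop, P (g X) X := by
  classical
  refine ⟨fun X => Nat.findGreatest (P · X) X, ?_, ?_⟩
  · refine tendsto_atTop.2 fun n => ?_
    filter_upwards [h n, eventually_ge_atTop n] with X hPX hnX
    exact Nat.le_findGreatest hnX hPX
  · filter_upwards [h 0] with X hPX
    exact Nat.findGreatest_spec (P := (P · X)) (Nat.zero_le X) hPX

theorem eventually_add_lt_of_tendsto_log_div {u v w : ℕ → ℕ} {A B C : ℝ}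
    (hu : Tendsto (fun X : ℕ => log (u X) / X) atTop (𝓝 A))
    (hv : Tendsto (fun X : ℕ => log (v X) / X) atTop (𝓝 B))
    (hw : Tendsto (fun X : ℕ => log (w X) / X) atTop (𝓝 C))
    (hu0 : ∀ᶠ X in atTop, u X ≠ 0) (hB : B < A) (hC : C < A) :
    ∀ᶠ X in atTop, v X + w X < u X := by
  obtain ⟨m, hm, hmA⟩ := exists_between (max_lt hB hC)
  obtain ⟨m', hmm', hm'A⟩ := exists_between hmA
  have hgap : ∀ᶠ X : ℕ in atTop, 2 ≤ exp ((m' - m) * X) :=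
    (tendsto_exp_atTop.comp (tendsto_natCast_atTop_atTop.const_mul_atTop
      (sub_pos.2 hmm'))).eventually_ge_atTop 2
  filter_upwards [hu.eventually (eventually_gt_nhds hm'A),
    hv.eventually (eventually_lt_nhds ((le_max_left B C).trans_lt hm)),
    hw.eventually (eventually_lt_nhds ((le_max_right B C).trans_lt hm)),
    hu0, hgap, eventually_gt_atTop 0] with X huX hvX hwX hu0X hgapX hX
  have hX' : (0 : ℝ) < X := by exact_mod_cast hX
  rw [lt_div_iff₀ hX'] at huX
  rw [div_lt_iff₀ hX'] at hvX hwX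
  have : (v X : ℝ) + w X < u X :=
    calc (v X : ℝ) + w X ≤ exp (log (v X)) + exp (log (w X)) :=
          add_le_add (le_exp_log _) (le_exp_log _)
      _ < exp (m * X) + exp (m * X) := add_lt_add (exp_lt_exp.2 hvX) (exp_lt_exp.2 hwX)
      _ ≤ exp ((m' - m) * X) * exp (m * X) := by nlinarith [exp_pos (m * X)]
      _ = exp (m' * X) := by rw [← exp_add]; ring_nf
      _ < u X := by rw [← exp_log (by positivity : (0 : ℝ) < u X)]; exact exp_lt_exp.2 huX
  exact_mod_cast this

section

variable {L : ℕ} {D : ℕ → (Fin (L + 1) → ℝ) → ℕ} {S : (Fin (L + 1) → ℝ) → ℝ}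
  {a b : Fin (L + 1) → ℝ}

theorem smul_pos_of_pos {t : ℝ} (ht : 0 < t) (hb : ∀ i, 0 < b i) : ∀ i, 0 < (t • b) i :=
  fun i => mul_pos ht (hb i)

theorem StrictInc.smul_lt_smul (hSI : StrictInc L S) (hb : ∀ i, 0 < b i) {s t : ℝ}
    (hs : 0 < s) (hst : s < t) : S (s • b) < S (t • b) := by
  refine hSI _ _ (smul_pos_of_pos hs hb) (smul_pos_of_pos (hs.trans hst) hb)
    (fun i => mul_le_mul_of_nonneg_right hst.le (hb i).le) fun h => ?_
  have h0 : s * b 0 = t * b 0 := congrFun h 0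
  exact hst.ne (mul_right_cancel₀ (hb 0).ne' h0)

theorem Continuous.exists_pos_one_add_smul_lt (hS : Continuous S) {y : ℝ} (h : S a < y) :
    ∃ ε : ℝ, 0 < ε ∧ S ((1 + ε) • a) < y := by
  have hlim : Tendsto (fun t : ℝ => S ((1 + t) • a)) (𝓝[>] 0) (𝓝 (S a)) :=
    ((hS.comp (by fun_prop)).tendsto' 0 _ (by simp)).mono_left nhdsWithin_le_nhds
  obtain ⟨ε, hεy, hε⟩ := ((hlim.eventually (eventually_lt_nhds h)).and self_mem_nhdsWithin).exists
  exact ⟨ε, hε, hεy⟩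

theorem IsDimFun.shellDim_le (hD : IsDimFun L D) (ha : ∀ i, 0 ≤ a i) {δ : ℕ → ℝ} {X : ℕ}
    {ε : ℝ} (hδε : δ X ≤ ε) : shellDim L D a δ X ≤ D X ((1 + ε) • a) :=
  (Nat.sub_le _ _).trans
    (hD.2 X _ _ fun i => mul_le_mul_of_nonneg_right (by linarith) (ha i))

theorem shellDim_eventually_lt_shellDim_const (hD : IsDimFun L D) (hS : RegBoltz L D S)
    (hSI : StrictInc L S) {a' : Fin (L + 1) → ℝ} (ha : ∀ i, 0 < a i) (ha' : ∀ i, 0 < a' i)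
    (heq : S a = S a') {δ : ℕ → ℝ} (hδ : Tendsto δ atTop (𝓝 0)) {c : ℝ} (hc0 : 0 < c)
    (hc1 : c < 1) :
    ∀ᶠ X in atTop, shellDim L D a δ X < shellDim L D a' (fun _ => c) X := by
  have hup : S a' < S ((1 + c) • a') := by
    simpa using hSI.smul_lt_smul ha' one_pos (lt_add_of_pos_right 1 hc0)
  have hdown : S ((1 - c) • a') < S a' := by
    simpa using hSI.smul_lt_smul ha' (sub_pos.2 hc1) (sub_lt_self 1 hc0)
  obtain ⟨ε, hε, hεc⟩ := hS.1.exists_pos_one_add_smul_lt (heq ▸ hup)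
  have hsum := eventually_add_lt_of_tendsto_log_div
    (hS.2 _ (smul_pos_of_pos (by linarith) ha'))
    (hS.2 _ (smul_pos_of_pos (by linarith) ha))
    (hS.2 _ (smul_pos_of_pos (sub_pos.2 hc1) ha'))
    ((eventually_ge_atTop 1).mono fun X hX => Nat.one_le_iff_ne_zero.1 (hD.1 X hX _))
    hεc (hdown.trans hup)
  filter_upwards [hsum, hδ.eventually (eventually_le_nhds hε)] with X hX hδX
  exact Nat.lt_sub_of_add_lt
    ((Nat.add_le_add_right (hD.shellDim_le (fun i => (ha i).le) hδX) _).trans_lt hX)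

end

/-- If `S̃ a = S̃ a'` then the shell dimension of `a` is eventually strictly dominated
by one of `a'`. -/
theorem stmt_2 {L : ℕ} (D : ℕ → (Fin (L + 1) → ℝ) → ℕ) (S : (Fin (L + 1) → ℝ) → ℝ)
    (hD : IsDimFun L D) (hS : RegBoltz L D S) (hSI : StrictInc L S)
    (a a' : Fin (L + 1) → ℝ) (ha : ∀ i, 0 < a i) (ha' : ∀ i, 0 < a' i)
    (heq : S a = S a') :
    ∀ δ : ℕ → ℝ, IsDelta δ → ∃ δ' : ℕ → ℝ, IsDelta δ' ∧
      ∃ X₀ : ℕ, ∀ X ≥ X₀, shellDim L D a δ X < shellDim L D a' δ' X := by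
  intro δ hδ
  obtain ⟨c, -, hc, hc0⟩ := exists_seq_strictAnti_tendsto' (zero_lt_one' ℝ)
  obtain ⟨g, hg, hlt⟩ := exists_tendsto_atTop_eventually_of_forall_eventually fun n =>
    shellDim_eventually_lt_shellDim_const hD hS hSI ha ha' heq hδ.2 (hc n).1 (hc n).2
  exact ⟨c ∘ g, ⟨fun X => (hc (g X)).1, hc0.comp hg⟩, eventually_atTop.1 hlt⟩
end

section
/- Let D be a dimension function and let a, a' ∈ ℝ^{L+1} with a > 0 and a' > 0. If S̄(a) < S̲(a'), then for every δ ∈ Δ there exists δ' ∈ Δ such that D_{a,δ}(X) ≤ D_{a',δ'}(X) for all sufficiently large X. (This is relation (14) of Theorem 2 of the paper: the dimension-dominance condition is exactly the majorization of microcanonical states realized by a unital channel, i.e., the possibility of the macroscopic adiabatic transformation a ≺_ad a'.) -/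
open Filter Topology

theorem Filter.eventually_lt_of_limsup_lt_liminf {α β : Type*} [CompleteLinearOrder β]
    [DenselyOrdered β] {l : Filter α} {u v : α → β} (h : limsup u l < liminf v l) :
    ∀ᶠ x in l, u x < v x := by
  obtain ⟨c, hu, hv⟩ := exists_between h
  filter_upwards [eventually_lt_of_limsup_lt hu, eventually_lt_of_lt_liminf hv] with x hux hvx
  exact hux.trans hvx

/-- `Real.log 0 = Real.log 1`, so the strict inequality is needed. -/
theorem Nat.le_of_log_lt_log {m n : ℕ} (h : Real.log m < Real.log n) : m ≤ n := by
  by_contra! hnm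
  have hlog : Real.log n ≤ Real.log m := by
    rcases Nat.eq_zero_or_pos n with rfl | hn
    · simpa using Real.log_natCast_nonneg m
    · exact Real.log_le_log (by exact_mod_cast hn) (by exact_mod_cast hnm.le)
  linarith

theorem eventually_le_of_limsup_log_div_lt_liminf {m n : ℕ → ℕ}
    (h : limsup (fun X : ℕ => ((Real.log (m X) / X : ℝ) : EReal)) atTop
      < liminf (fun X : ℕ => ((Real.log (n X) / X : ℝ) : EReal)) atTop) :
    ∀ᶠ X in atTop, m X ≤ n X := by
  filter_upwards [eventually_lt_of_limsup_lt_liminf h, eventually_ge_atTop 1] with X hlt hX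
  have hXpos : (0 : ℝ) < X := by exact_mod_cast hX
  exact Nat.le_of_log_lt_log <| (div_lt_div_iff_of_pos_right hXpos).mp (EReal.coe_lt_coe_iff.mp hlt)

theorem stmt_5_general {L : ℕ} (D : ℕ → (Fin (L + 1) → ℝ) → ℕ)
    (a a' : Fin (L + 1) → ℝ)
    (hlt : SbarSup L D a < SbarInf L D a') :
    ∀ δ : ℕ → ℝ, IsDelta δ → ∃ δ' : ℕ → ℝ, IsDelta δ' ∧
      ∃ X₀ : ℕ, ∀ X ≥ X₀, shellDim L D a δ X ≤ shellDim L D a' δ' X := by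
  intro δ hδ
  have hlimsup : limsup (fun X : ℕ => ((Real.log (shellDim L D a δ X) / X : ℝ) : EReal)) atTop
      ≤ SbarSup L D a :=
    le_iSup (fun d : {δ : ℕ → ℝ // IsDelta δ} =>
      limsup (fun X : ℕ => ((Real.log (shellDim L D a d.1 X) / X : ℝ) : EReal)) atTop) ⟨δ, hδ⟩
  obtain ⟨⟨δ', hδ'⟩, hliminf⟩ := lt_iSup_iff.mp (hlimsup.trans_lt hlt)
  exact ⟨δ', hδ', eventually_atTop.mp (eventually_le_of_limsup_log_div_lt_liminf hliminf)⟩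

/-- Relation (14) of Theorem 2: if `S̄(a) < S̲(a')` then the shell dimension of `a` is
eventually dominated by one of `a'`. -/
theorem stmt_5 {L : ℕ} (D : ℕ → (Fin (L + 1) → ℝ) → ℕ)
    (hD : IsDimFun L D)
    (a a' : Fin (L + 1) → ℝ) (ha : ∀ i, 0 < a i) (ha' : ∀ i, 0 < a' i)
    (hlt : SbarSup L D a < SbarInf L D a') :
    ∀ δ : ℕ → ℝ, IsDelta δ → ∃ δ' : ℕ → ℝ, IsDelta δ' ∧
      ∃ X₀ : ℕ, ∀ X ≥ X₀, shellDim L D a δ X ≤ shellDim L D a' δ' X :=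
  stmt_5_general D a a' hlt
end

section
/- Let D be a dimension function and let a, a' ∈ ℝ^{L+1} with a > 0 and a' > 0. If S̲(a) > S̄(a'), then there exists δ ∈ Δ such that for every δ' ∈ Δ the following holds for all sufficiently large X: D_{a,δ}(X) ≥ 1, and if D_{a',δ'}(X) ≥ 1, then every summable q : ℕ → ℝ with q i ≥ 0 for all i, Σ_i q i = 1, and q i ≤ 1/D_{a,δ}(X) for all i satisfies T(q, D_{a',δ'}(X)) ≥ 1/3. (This is the impossibility direction, relation (15), of Theorem 2 of the paper.) -/
open Filter Topology

/-!
Choose `δ` with `liminf (1/X) log N_X > S̄(a')`, where `N_X = D_{a,δ}(X)`. Then for every `δ'`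
there are `u < v` with `d_X = D_{a',δ'}(X) ≤ e^{uX}` and `N_X ≥ e^{vX}` eventually, so
`d_X / N_X → 0`. A distribution with all weights at most `1 / N_X` puts mass at most `d_X / N_X`
on `{0, …, d_X - 1}`, so its total variation distance from the uniform distribution there is at
least `1 - d_X / N_X`.
-/

lemma natCast_le_exp_of_log_div_lt {n X : ℕ} {u : ℝ} (hX : 0 < X)
    (h : Real.log n / X < u) : (n : ℝ) ≤ Real.exp (u * X) := by
  rcases Nat.eq_zero_or_pos n with rfl | hn
  · simpa using (Real.exp_pos _).le
  · have hX' : (0 : ℝ) < X := by exact_mod_cast hX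
    exact ((Real.log_lt_iff_lt_exp (by exact_mod_cast hn)).mp ((div_lt_iff₀ hX').mp h)).le

lemma exp_lt_natCast_of_lt_log_div {n X : ℕ} {v : ℝ} (hX : 0 < X) (hv : 0 ≤ v)
    (h : v < Real.log n / X) : Real.exp (v * X) < n := by
  have hX' : (0 : ℝ) < X := by exact_mod_cast hX
  have hlog : v * X < Real.log n := (lt_div_iff₀ hX').mp h
  have hn : n ≠ 0 := by
    rintro rfl
    simp only [Nat.cast_zero, Real.log_zero] at hlog
    nlinarith
  exact (Real.lt_log_iff_exp_lt (by positivity)).mp hlog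

lemma limsup_log_natCast_div_nonneg (n : ℕ → ℕ) :
    0 ≤ limsup (fun X : ℕ => ((Real.log (n X) / X : ℝ) : EReal)) atTop :=
  le_limsup_of_frequently_le (Frequently.of_forall fun X => by
    exact_mod_cast div_nonneg (Real.log_natCast_nonneg _) (Nat.cast_nonneg X)) (by isBoundedDefault)

lemma tendsto_exp_mul_natCast_of_neg {c : ℝ} (hc : c < 0) :
    Tendsto (fun X : ℕ => Real.exp (c * X)) atTop (𝓝 0) :=
  Real.tendsto_exp_atBot.comp (tendsto_natCast_atTop_atTop.const_mul_atTop_of_neg hc)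

theorem eventually_one_le_and_tendsto_div_of_limsup_lt_liminf (d N : ℕ → ℕ)
    (h : limsup (fun X : ℕ => ((Real.log (d X) / X : ℝ) : EReal)) atTop <
      liminf (fun X : ℕ => ((Real.log (N X) / X : ℝ) : EReal)) atTop) :
    (∀ᶠ X in atTop, 1 ≤ N X) ∧ Tendsto (fun X => (d X : ℝ) / N X) atTop (𝓝 0) := by
  obtain ⟨u, hdu, huN⟩ := EReal.exists_between_coe_real h
  obtain ⟨v, huv, hvN⟩ := EReal.exists_between_coe_real huN
  have hu : 0 < u := by exact_mod_cast (limsup_log_natCast_div_nonneg d).trans_lt hdu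
  have huv : u < v := by exact_mod_cast huv
  have hbounds : ∀ᶠ X : ℕ in atTop,
      (d X : ℝ) ≤ Real.exp (u * X) ∧ Real.exp (v * X) < N X := by
    filter_upwards [eventually_lt_of_limsup_lt hdu, eventually_lt_of_lt_liminf hvN,
      eventually_gt_atTop 0] with X hd hN hX
    exact ⟨natCast_le_exp_of_log_div_lt hX (by exact_mod_cast hd),
      exp_lt_natCast_of_lt_log_div hX (by linarith) (by exact_mod_cast hN)⟩
  refine ⟨hbounds.mono fun X hX => ?_, ?_⟩
  · exact_mod_cast (Real.exp_pos _).trans hX.2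
  · refine tendsto_of_tendsto_of_tendsto_of_le_of_le' tendsto_const_nhds
      (tendsto_exp_mul_natCast_of_neg (sub_neg.mpr huv)) (Eventually.of_forall fun X => by
        positivity) (hbounds.mono fun X ⟨hd, hN⟩ => ?_)
    calc (d X : ℝ) / N X ≤ Real.exp (u * X) / Real.exp (v * X) :=
          div_le_div₀ (Real.exp_pos _).le hd (Real.exp_pos _) hN.le
      _ = Real.exp ((u - v) * X) := by rw [← Real.exp_sub, sub_mul]

lemma one_sub_sum_range_le_TVu {q : ℕ → ℝ} (hq : Summable q) (hsum : ∑' i, q i = 1)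
    {d : ℕ} (hd : d ≠ 0) : 1 - ∑ i ∈ Finset.range d, q i ≤ TVu q d := by
  have htail : ∑' i, q (i + d) = 1 - ∑ i ∈ Finset.range d, q i := by
    linarith [hq.sum_add_tsum_nat_add d]
  have hhead : 1 - ∑ i ∈ Finset.range d, q i ≤ ∑ i ∈ Finset.range d, |q i - 1 / (d : ℝ)| :=
    calc 1 - ∑ i ∈ Finset.range d, q i = ∑ i ∈ Finset.range d, (1 / (d : ℝ) - q i) := by
          rw [Finset.sum_sub_distrib, Finset.sum_const, Finset.card_range, nsmul_eq_mul,
            mul_one_div_cancel (Nat.cast_ne_zero.mpr hd)]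
      _ ≤ ∑ i ∈ Finset.range d, |q i - 1 / (d : ℝ)| :=
          Finset.sum_le_sum fun i _ => abs_sub_comm (q i) _ ▸ le_abs_self _
  rw [TVu, htail]
  linarith

lemma one_sub_div_le_TVu {q : ℕ → ℝ} (hq : Summable q) (hsum : ∑' i, q i = 1) {d N : ℕ}
    (hd : d ≠ 0) (hqN : ∀ i, q i ≤ 1 / (N : ℝ)) : 1 - d / N ≤ TVu q d := by
  have hmass : ∑ i ∈ Finset.range d, q i ≤ d / N :=
    calc ∑ i ∈ Finset.range d, q i ≤ ∑ _i ∈ Finset.range d, 1 / (N : ℝ) :=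
          Finset.sum_le_sum fun i _ => hqN i
      _ = d / N := by rw [Finset.sum_const, Finset.card_range, nsmul_eq_mul, mul_one_div]
  linarith [one_sub_sum_range_le_TVu hq hsum hd]

theorem stmt_6_general {L : ℕ} (D : ℕ → (Fin (L + 1) → ℝ) → ℕ)
    (a a' : Fin (L + 1) → ℝ)
    (hgt : SbarSup L D a' < SbarInf L D a) :
    ∃ δ : ℕ → ℝ, IsDelta δ ∧ ∀ δ' : ℕ → ℝ, IsDelta δ' →
      ∃ X₀ : ℕ, ∀ X ≥ X₀,
        1 ≤ shellDim L D a δ X ∧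
        (1 ≤ shellDim L D a' δ' X →
          ∀ q : ℕ → ℝ, Summable q → (∀ i, 0 ≤ q i) → (∑' i, q i) = 1 →
            (∀ i, q i ≤ 1 / (shellDim L D a δ X : ℝ)) →
            (1 : ℝ) / 3 ≤ TVu q (shellDim L D a' δ' X)) := by
  obtain ⟨⟨δ, hδ⟩, hlt⟩ := lt_iSup_iff.mp hgt
  refine ⟨δ, hδ, fun δ' hδ' => ?_⟩
  have hgap := (le_iSup (fun d : {δ : ℕ → ℝ // IsDelta δ} => limsup
    (fun X : ℕ => ((Real.log (shellDim L D a' d.1 X) / X : ℝ) : EReal)) atTop) ⟨δ', hδ'⟩).trans_lt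
    hlt
  obtain ⟨hN, hratio⟩ := eventually_one_le_and_tendsto_div_of_limsup_lt_liminf _ _ hgap
  obtain ⟨X₀, hX₀⟩ := eventually_atTop.mp
    (hN.and (hratio.eventually (eventually_le_nhds (by norm_num : (0 : ℝ) < 2 / 3))))
  refine ⟨X₀, fun X hX => ⟨(hX₀ X hX).1, fun hd q hq _ hsum hqN => ?_⟩⟩
  linarith [one_sub_div_le_TVu hq hsum (Nat.one_le_iff_ne_zero.mp hd) hqN, (hX₀ X hX).2]

/-- Relation (15) of Theorem 2 (impossibility direction). -/
theorem stmt_6 {L : ℕ} (D : ℕ → (Fin (L + 1) → ℝ) → ℕ)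
    (hD : IsDimFun L D)
    (a a' : Fin (L + 1) → ℝ) (ha : ∀ i, 0 < a i) (ha' : ∀ i, 0 < a' i)
    (hgt : SbarSup L D a' < SbarInf L D a) :
    ∃ δ : ℕ → ℝ, IsDelta δ ∧ ∀ δ' : ℕ → ℝ, IsDelta δ' →
      ∃ X₀ : ℕ, ∀ X ≥ X₀,
        1 ≤ shellDim L D a δ X ∧
        (1 ≤ shellDim L D a' δ' X →
          ∀ q : ℕ → ℝ, Summable q → (∀ i, 0 ≤ q i) → (∑' i, q i) = 1 →
            (∀ i, q i ≤ 1 / (shellDim L D a δ X : ℝ)) →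
            (1 : ℝ) / 3 ≤ TVu q (shellDim L D a' δ' X)) :=
  stmt_6_general D a a' hgt
end

section
/- Let f, g : ℕ → ℕ satisfy f X ≥ 1 and g X ≥ 1 for all X ≥ 1, and suppose s := liminf_{X→∞} (1/X)·log(f X) − limsup_{X→∞} (1/X)·log(g X) > 0. Then for all sufficiently large X, every summable q : ℕ → ℝ with q i ≥ 0 for all i, Σ_i q i = 1, and q i ≤ 1/(f X) for all i satisfies T(q, g X) ≥ (1/2)·(1 − e^{−X·s/2}). (This is the core of the impossibility half of Lemma 4 in the paper, with f X the initial and g X the target microcanonical dimension.) -/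
open Filter Topology

/-! The TV distance to the uniform distribution on `d = g X` points is at least the mass that
`q` is missing there: `Σ_{i<d} |q i - 1/d| ≥ 1 - Σ_{i<d} q i ≥ 1 - d / f X`, as `q ≤ 1 / f X`.
The rate gap `s` makes `d / f X < e^{-X s/2}` eventually: `log (f X) / X` eventually exceeds
its liminf minus `s/4`, and `log (g X) / X` eventually stays below its limsup plus `s/4`. -/

theorem EReal.exists_coe_of_sub_eq_coe {x y : EReal} {s : ℝ} (h : x - y = s) :
    ∃ a b : ℝ, x = a ∧ y = b ∧ a - b = s := by
  induction x using EReal.rec <;> induction y using EReal.rec <;> simp_all [← EReal.coe_sub]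

theorem Filter.eventually_lt_sub_of_liminf_sub_limsup_eq {α : Type*} {l : Filter α}
    {u v : α → ℝ} {s t : ℝ}
    (h : liminf (fun n => (u n : EReal)) l - limsup (fun n => (v n : EReal)) l = s)
    (ht : t < s) : ∀ᶠ n in l, t < u n - v n := by
  obtain ⟨a, b, ha, hb, hab⟩ := EReal.exists_coe_of_sub_eq_coe h
  obtain ⟨ε, hε⟩ : ∃ ε : ℝ, ε = (s - t) / 2 := ⟨_, rfl⟩
  have hu : ∀ᶠ n in l, a - ε < u n := by
    have : ((a - ε : ℝ) : EReal) < liminf (fun n => (u n : EReal)) l := by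
      rw [ha]; exact_mod_cast (by linarith : a - ε < a)
    filter_upwards [eventually_lt_of_lt_liminf this] with n hn using by exact_mod_cast hn
  have hv : ∀ᶠ n in l, v n < b + ε := by
    have : limsup (fun n => (v n : EReal)) l < ((b + ε : ℝ) : EReal) := by
      rw [hb]; exact_mod_cast (by linarith : b < b + ε)
    filter_upwards [eventually_lt_of_limsup_lt this] with n hn using by exact_mod_cast hn
  filter_upwards [hu, hv] with n hun hvn
  linarith

theorem eventually_div_lt_exp_of_liminf_sub_limsup_eq {f g : ℕ → ℕ}
    (hf : ∀ X : ℕ, 1 ≤ X → 1 ≤ f X) (hg : ∀ X : ℕ, 1 ≤ X → 1 ≤ g X) {s : ℝ}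
    (hs : liminf (fun X : ℕ => ((Real.log (f X) / X : ℝ) : EReal)) atTop -
          limsup (fun X : ℕ => ((Real.log (g X) / X : ℝ) : EReal)) atTop = (s : EReal))
    (hpos : 0 < s) :
    ∀ᶠ X : ℕ in atTop, (g X : ℝ) / f X < Real.exp (-(X : ℝ) * s / 2) := by
  filter_upwards [eventually_lt_sub_of_liminf_sub_limsup_eq hs (half_lt_self hpos),
    eventually_ge_atTop 1] with X hgap hX
  have hX0 : (0 : ℝ) < X := by exact_mod_cast hX
  have hf0 : (0 : ℝ) < f X := by exact_mod_cast hf X hX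
  have hg0 : (0 : ℝ) < g X := by exact_mod_cast hg X hX
  rw [← Real.log_lt_iff_lt_exp (div_pos hg0 hf0), Real.log_div hg0.ne' hf0.ne']
  rw [← sub_div, lt_div_iff₀ hX0] at hgap
  linarith

theorem one_sub_mul_le_sum_abs_sub_one_div {q : ℕ → ℝ} {c : ℝ} (hqc : ∀ i, q i ≤ c) {d : ℕ}
    (hd : d ≠ 0) : 1 - d * c ≤ ∑ i ∈ Finset.range d, |q i - 1 / (d : ℝ)| :=
  calc 1 - d * c ≤ ∑ i ∈ Finset.range d, (1 / (d : ℝ) - q i) := by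
        rw [Finset.sum_sub_distrib, Finset.sum_const, Finset.card_range, nsmul_eq_mul,
          mul_one_div_cancel (by exact_mod_cast hd)]
        have hmass : ∑ i ∈ Finset.range d, q i ≤ d * c := by
          simpa using Finset.sum_le_card_nsmul (Finset.range d) q c fun i _ => hqc i
        linarith
    _ ≤ ∑ i ∈ Finset.range d, |q i - 1 / (d : ℝ)| :=
        Finset.sum_le_sum fun i _ => abs_sub_comm (q i) _ ▸ le_abs_self _

theorem half_one_sub_mul_le_TVu {q : ℕ → ℝ} (hq0 : ∀ i, 0 ≤ q i) {c : ℝ} (hqc : ∀ i, q i ≤ c)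
    {d : ℕ} (hd : d ≠ 0) : (1 / 2 : ℝ) * (1 - d * c) ≤ TVu q d := by
  have htail : 0 ≤ ∑' i, q (i + d) := tsum_nonneg fun i => hq0 _
  have := one_sub_mul_le_sum_abs_sub_one_div hqc hd
  rw [TVu]
  linarith

/-- Core of the impossibility half of Lemma 4: if the initial dimension rate exceeds
the target one by `s > 0`, the trace-distance bound `(1/2)(1 - e^{-Xs/2})` holds. -/
theorem stmt_8 (f g : ℕ → ℕ)
    (hf : ∀ X : ℕ, 1 ≤ X → 1 ≤ f X) (hg : ∀ X : ℕ, 1 ≤ X → 1 ≤ g X)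
    (s : ℝ)
    (hs : Filter.liminf (fun X : ℕ => ((Real.log (f X) / X : ℝ) : EReal)) atTop -
          Filter.limsup (fun X : ℕ => ((Real.log (g X) / X : ℝ) : EReal)) atTop = (s : EReal))
    (hpos : 0 < s) :
    ∃ X₀ : ℕ, ∀ X ≥ X₀,
      ∀ q : ℕ → ℝ, Summable q → (∀ i, 0 ≤ q i) → (∑' i, q i) = 1 →
        (∀ i, q i ≤ 1 / (f X : ℝ)) →
        (1 / 2 : ℝ) * (1 - Real.exp (-(X : ℝ) * s / 2)) ≤ TVu q (g X) := by
  obtain ⟨X₀, hX₀⟩ := eventually_atTop.mp <|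
    (eventually_div_lt_exp_of_liminf_sub_limsup_eq hf hg hs hpos).and (eventually_ge_atTop 1)
  refine ⟨X₀, fun X hX q _ hq0 _ hqf => ?_⟩
  obtain ⟨hratio, hX1⟩ := hX₀ X hX
  calc (1 / 2 : ℝ) * (1 - Real.exp (-(X : ℝ) * s / 2))
      ≤ 1 / 2 * (1 - g X * (1 / f X)) := by rw [mul_one_div]; linarith
    _ ≤ TVu q (g X) := half_one_sub_mul_le_TVu hq0 hqf (Nat.one_le_iff_ne_zero.mp (hg X hX1))
end

section
/- Let D be a dimension function satisfying the regularized Boltzmann entropy hypothesis with S̃ strictly increasing in each coordinate, let a, a' ∈ ℝ^{L+1} with a > 0, a' > 0 and S̃ a = S̃ a', and let δ ∈ Δ. If η : ℕ → ℝ satisfies D X ((1−δ X)•a) ≤ D X ((1+η X)•a') ≤ D X ((1+δ X)•a) for every X ≥ 1, then lim_{X→∞} η X = 0. (The nonempty-window case of Lemma 3 of the paper: any selection from the window A_X tends to 0.) -/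
/-!
If `η X ≥ ε` for infinitely many `X`, monotonicity of `D` squeezes the window between the fixed
points `(1 + ε) • a'` and `(1 + ε') • a`, where `ε'` bounds `δ X` eventually. Passing to the limit in
`(1/X) log D` along those `X` gives `S ((1 + ε) • a') ≤ S ((1 + ε') • a)`. But strict monotonicity
gives `S ((1 + ε) • a') > S a' = S a`, and continuity lets `ε'` be chosen so small that
`S ((1 + ε') • a)` stays below `S ((1 + ε) • a')`. The lower bound is symmetric.
-/

open Filter Topology

theorem monotone_log_natCast : Monotone fun n : ℕ => Real.log n := by
  intro m n hmn
  rcases m.eq_zero_or_pos with rfl | hm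
  · simpa using Real.log_natCast_nonneg n
  · exact Real.log_le_log (by exact_mod_cast hm) (by exact_mod_cast hmn)

variable {L : ℕ} {D : ℕ → (Fin (L + 1) → ℝ) → ℕ} {S : (Fin (L + 1) → ℝ) → ℝ}
  {a a' : Fin (L + 1) → ℝ}

theorem StrictInc.apply_smul_lt_apply_smul (hS : StrictInc L S) (ha : ∀ i, 0 < a i) {s t : ℝ}
    (hs : 0 < s) (hst : s < t) : S (s • a) < S (t • a) := by
  have ha0 : a ≠ 0 := fun h => (ha 0).ne' (congrFun h 0)
  exact hS _ _ (fun i => mul_pos hs (ha i)) (fun i => mul_pos (hs.trans hst) (ha i))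
    (fun i => mul_le_mul_of_nonneg_right hst.le (ha i).le)
    fun h => hst.ne (smul_left_injective ℝ ha0 h)

namespace RegBoltz

theorem le_of_frequently_le (hS : RegBoltz L D S) {b c : Fin (L + 1) → ℝ}
    (hb : ∀ i, 0 < b i) (hc : ∀ i, 0 < c i) (h : ∃ᶠ X in atTop, D X b ≤ D X c) : S b ≤ S c :=
  le_of_tendsto_of_tendsto_of_frequently (hS.2 b hb) (hS.2 c hc) <| h.mono fun X hX =>
    div_le_div_of_nonneg_right (monotone_log_natCast hX) X.cast_nonneg

variable {δ η : ℕ → ℝ}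

theorem eventually_lt_of_dim_smul_le (hS : RegBoltz L D S) (hSI : StrictInc L S)
    (hmono : ∀ X, Monotone (D X)) (ha : ∀ i, 0 < a i) (ha' : ∀ i, 0 < a' i)
    (hle : S a ≤ S a') (hδ : Tendsto δ atTop (𝓝 0))
    (hη : ∀ᶠ X in atTop, D X ((1 + η X) • a') ≤ D X ((1 + δ X) • a)) {ε : ℝ} (hε : 0 < ε) :
    ∀ᶠ X in atTop, η X < ε := by
  have hlt : S a < S ((1 + ε) • a') :=
    hle.trans_lt <| by
      simpa using hSI.apply_smul_lt_apply_smul ha' one_pos (lt_add_of_pos_right 1 hε)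
  have hcont : ContinuousAt (fun t : ℝ => S ((1 + t) • a)) 0 :=
    (hS.1.comp (by fun_prop : Continuous fun t : ℝ => (1 + t) • a)).continuousAt
  obtain ⟨ε', hε', hε'lt⟩ :=
    (hcont.eventually_lt continuousAt_const (by simpa using hlt)).exists_gt
  by_contra hfreq
  rw [not_eventually] at hfreq
  refine hε'lt.not_ge (hS.le_of_frequently_le (fun i => mul_pos (by linarith) (ha' i))
    (fun i => mul_pos (by linarith) (ha i)) ?_)
  refine (hfreq.and_eventually (hη.and (hδ.eventually (ge_mem_nhds hε')))).mono ?_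
  rintro X ⟨hηX, hdim, hδX⟩
  calc D X ((1 + ε) • a') ≤ D X ((1 + η X) • a') :=
        hmono X (smul_le_smul_of_nonneg_right (by linarith [not_lt.1 hηX]) fun i => (ha' i).le)
    _ ≤ D X ((1 + δ X) • a) := hdim
    _ ≤ D X ((1 + ε') • a) :=
        hmono X (smul_le_smul_of_nonneg_right (by linarith) fun i => (ha i).le)

theorem eventually_neg_lt_of_le_dim_smul (hS : RegBoltz L D S) (hSI : StrictInc L S)
    (hmono : ∀ X, Monotone (D X)) (ha : ∀ i, 0 < a i) (ha' : ∀ i, 0 < a' i)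
    (hle : S a' ≤ S a) (hδ : Tendsto δ atTop (𝓝 0))
    (hη : ∀ᶠ X in atTop, D X ((1 - δ X) • a) ≤ D X ((1 + η X) • a')) {ε : ℝ} (hε : 0 < ε) :
    ∀ᶠ X in atTop, -ε < η X := by
  -- `(1 - ε) • a'` has to stay in the positive orthant, where the entropy limit is available.
  wlog hε1 : ε < 1 generalizing ε
  · exact (this one_half_pos (by norm_num)).mono fun X hX => by linarith [not_lt.1 hε1]
  have hlt : S ((1 - ε) • a') < S a :=
    lt_of_lt_of_le (by
      simpa using hSI.apply_smul_lt_apply_smul ha' (sub_pos.2 hε1) (sub_lt_self 1 hε)) hle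
  have hcont : ContinuousAt (fun t : ℝ => S ((1 - t) • a)) 0 :=
    (hS.1.comp (by fun_prop : Continuous fun t : ℝ => (1 - t) • a)).continuousAt
  obtain ⟨ε', hε', hε'lt, hε'1⟩ :=
    ((continuousAt_const.eventually_lt hcont (by simpa using hlt)).and
      (eventually_lt_nhds one_pos)).exists_gt
  by_contra hfreq
  rw [not_eventually] at hfreq
  refine hε'lt.not_ge (hS.le_of_frequently_le (fun i => mul_pos (by linarith) (ha i))
    (fun i => mul_pos (by linarith) (ha' i)) ?_)
  refine (hfreq.and_eventually (hη.and (hδ.eventually (ge_mem_nhds hε')))).mono ?_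
  rintro X ⟨hηX, hdim, hδX⟩
  calc D X ((1 - ε') • a) ≤ D X ((1 - δ X) • a) :=
        hmono X (smul_le_smul_of_nonneg_right (by linarith) fun i => (ha i).le)
    _ ≤ D X ((1 + η X) • a') := hdim
    _ ≤ D X ((1 - ε) • a') :=
        hmono X (smul_le_smul_of_nonneg_right (by linarith [not_lt.1 hηX]) fun i => (ha' i).le)

end RegBoltz

/-- Nonempty-window case of Lemma 3: any selection from the window `A_X` tends to `0`. -/
theorem stmt_11 {L : ℕ} (D : ℕ → (Fin (L + 1) → ℝ) → ℕ) (S : (Fin (L + 1) → ℝ) → ℝ)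
    (hD : IsDimFun L D) (hS : RegBoltz L D S) (hSI : StrictInc L S)
    (a a' : Fin (L + 1) → ℝ) (ha : ∀ i, 0 < a i) (ha' : ∀ i, 0 < a' i)
    (heq : S a = S a')
    (δ : ℕ → ℝ) (hδ : IsDelta δ)
    (η : ℕ → ℝ)
    (hη : ∀ X : ℕ, 1 ≤ X →
      D X (fun i => (1 - δ X) * a i) ≤ D X (fun i => (1 + η X) * a' i) ∧
      D X (fun i => (1 + η X) * a' i) ≤ D X (fun i => (1 + δ X) * a i)) :
    Tendsto η atTop (nhds 0) := by
  have hmono : ∀ X, Monotone (D X) := fun X b c h => hD.2 X b c h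
  have hwindow := (eventually_ge_atTop 1).mono hη
  rw [tendsto_order]
  refine ⟨fun e he => ?_, fun e he => ?_⟩
  · simpa using hS.eventually_neg_lt_of_le_dim_smul hSI hmono ha ha' heq.ge hδ.2
      (hwindow.mono fun X h => h.1) (neg_pos.2 he)
  · exact hS.eventually_lt_of_dim_smul_le hSI hmono ha ha' heq.le hδ.2
      (hwindow.mono fun X h => h.2) he
end

section
/- Let D be a dimension function satisfying the regularized Boltzmann entropy hypothesis with S̃ strictly increasing in each coordinate, let a, a' ∈ ℝ^{L+1} with a > 0, a' > 0 and S̃ a = S̃ a', and let δ ∈ Δ. If η : ℕ → ℝ satisfies, for every X ≥ 1, both D X ((1+η X − 1/X)•a') ≤ D X ((1−δ X)•a) and D X ((1+δ X)•a) ≤ D X ((1+η X + 1/X)•a'), then lim_{X→∞} η X = 0. (The empty-window case of Lemma 3 of the paper.) -/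
open Filter Topology

/-!
Fix `1 < s < 1 + c`. Whenever `η X ≥ c` and `1 / X < 1 + c - s`, monotonicity of `D` chains
`D X (s • a') ≤ D X ((1 - δ X) • a) ≤ D X a`; but `S (s • a') > S a' = S a`, so the entropy
hypothesis forces `D X a < D X (s • a')` for all large `X`. Hence eventually `η X < c`.
The lower bound is symmetric, with `max (1 + c) 0 < s < 1` for `c < 0`.
-/

theorem Real.natCast_lt_of_log_lt {m n : ℕ} (h : Real.log m < Real.log n) : m < n := by
  by_contra! hnm
  rcases Nat.eq_zero_or_pos n with rfl | hn
  · simp only [Nat.cast_zero, Real.log_zero] at h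
    exact h.not_ge (Real.log_natCast_nonneg m)
  · exact h.not_ge (Real.log_le_log (by exact_mod_cast hn) (by exact_mod_cast hnm))

section

variable {L : ℕ} {D : ℕ → (Fin (L + 1) → ℝ) → ℕ} {S : (Fin (L + 1) → ℝ) → ℝ}

theorem IsDimFun.monotone (hD : IsDimFun L D) (X : ℕ) : Monotone (D X) :=
  fun b c h => hD.2 X b c h

theorem StrictInc.lt_smul (hSI : StrictInc L S) {b : Fin (L + 1) → ℝ} (hb : ∀ i, 0 < b i)
    {s t : ℝ} (hs : 0 < s) (hst : s < t) : S (s • b) < S (t • b) := by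
  refine hSI _ _ (fun i => mul_pos hs (hb i)) (fun i => mul_pos (hs.trans hst) (hb i))
    (fun i => mul_le_mul_of_nonneg_right hst.le (hb i).le) fun h => hst.ne ?_
  exact mul_right_cancel₀ (hb 0).ne' (congrFun h 0)

theorem RegBoltz.eventually_lt (hS : RegBoltz L D S) {b c : Fin (L + 1) → ℝ}
    (hb : ∀ i, 0 < b i) (hc : ∀ i, 0 < c i) (h : S b < S c) :
    ∀ᶠ X in atTop, D X b < D X c := by
  filter_upwards [(hS.2 b hb).eventually_lt (hS.2 c hc) h, eventually_gt_atTop 0] with X hlt hX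
  exact Real.natCast_lt_of_log_lt ((div_lt_div_iff_of_pos_right (Nat.cast_pos.2 hX)).1 hlt)

variable {a a' : Fin (L + 1) → ℝ} {δ η : ℕ → ℝ}

theorem eventually_lt_of_dim_scaled_le (hD : IsDimFun L D) (hS : RegBoltz L D S)
    (hSI : StrictInc L S) (ha : ∀ i, 0 < a i) (ha' : ∀ i, 0 < a' i) (heq : S a = S a')
    (hδ : ∀ X, 0 ≤ δ X)
    (hη : ∀ X : ℕ, 1 ≤ X → D X ((1 + η X - 1 / (X : ℝ)) • a') ≤ D X ((1 - δ X) • a))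
    {c : ℝ} (hc : 0 < c) : ∀ᶠ X in atTop, η X < c := by
  obtain ⟨s, hs1, hsc⟩ := exists_between (lt_add_of_pos_right 1 hc)
  have hSs : S a < S (s • a') := by simpa [heq] using hSI.lt_smul ha' one_pos hs1
  filter_upwards [hS.eventually_lt ha (fun i => mul_pos (one_pos.trans hs1) (ha' i)) hSs,
    eventually_ge_atTop 1,
    tendsto_one_div_atTop_nhds_zero_nat.eventually_lt_const (sub_pos.2 hsc)] with X hlt hX hXinv
  by_contra! hηc
  refine hlt.not_ge ?_
  calc D X (s • a') ≤ D X ((1 + η X - 1 / (X : ℝ)) • a') :=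
        hD.monotone X (smul_le_smul_of_nonneg_right (by linarith) fun i => (ha' i).le)
    _ ≤ D X ((1 - δ X) • a) := hη X hX
    _ ≤ D X a :=
        hD.monotone X (smul_le_of_le_one_left (fun i => (ha i).le) (by linarith [hδ X]))

theorem eventually_gt_of_le_dim_scaled (hD : IsDimFun L D) (hS : RegBoltz L D S)
    (hSI : StrictInc L S) (ha : ∀ i, 0 < a i) (ha' : ∀ i, 0 < a' i) (heq : S a = S a')
    (hδ : ∀ X, 0 ≤ δ X)
    (hη : ∀ X : ℕ, 1 ≤ X → D X ((1 + δ X) • a) ≤ D X ((1 + η X + 1 / (X : ℝ)) • a'))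
    {c : ℝ} (hc : c < 0) : ∀ᶠ X in atTop, c < η X := by
  obtain ⟨s, hsc, hs1⟩ := exists_between (max_lt (by linarith : 1 + c < 1) one_pos)
  have hs0 : 0 < s := (le_max_right _ _).trans_lt hsc
  have hSs : S (s • a') < S a := by simpa [heq] using hSI.lt_smul ha' hs0 hs1
  filter_upwards [hS.eventually_lt (fun i => mul_pos hs0 (ha' i)) ha hSs,
    eventually_ge_atTop 1,
    tendsto_one_div_atTop_nhds_zero_nat.eventually_lt_const
      (sub_pos.2 ((le_max_left _ _).trans_lt hsc))] with X hlt hX hXinv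
  by_contra! hηc
  refine hlt.not_ge ?_
  calc D X a ≤ D X ((1 + δ X) • a) :=
        hD.monotone X (le_smul_of_one_le_left (fun i => (ha i).le) (by linarith [hδ X]))
    _ ≤ D X ((1 + η X + 1 / (X : ℝ)) • a') := hη X hX
    _ ≤ D X (s • a') :=
        hD.monotone X (smul_le_smul_of_nonneg_right (by linarith) fun i => (ha' i).le)

end

/-- Empty-window case of Lemma 3. -/
theorem stmt_12 {L : ℕ} (D : ℕ → (Fin (L + 1) → ℝ) → ℕ) (S : (Fin (L + 1) → ℝ) → ℝ)
    (hD : IsDimFun L D) (hS : RegBoltz L D S) (hSI : StrictInc L S)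
    (a a' : Fin (L + 1) → ℝ) (ha : ∀ i, 0 < a i) (ha' : ∀ i, 0 < a' i)
    (heq : S a = S a')
    (δ : ℕ → ℝ) (hδ : IsDelta δ)
    (η : ℕ → ℝ)
    (hη : ∀ X : ℕ, 1 ≤ X →
      D X (fun i => (1 + η X - 1 / (X : ℝ)) * a' i) ≤ D X (fun i => (1 - δ X) * a i) ∧
      D X (fun i => (1 + δ X) * a i) ≤ D X (fun i => (1 + η X + 1 / (X : ℝ)) * a' i)) :
    Tendsto η atTop (nhds 0) := by
  have hδ₀ : ∀ X, 0 ≤ δ X := fun X => (hδ.1 X).le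
  refine tendsto_order.2 ⟨fun c hc => ?_, fun c hc => ?_⟩
  · exact eventually_gt_of_le_dim_scaled hD hS hSI ha ha' heq hδ₀ (fun X hX => (hη X hX).2) hc
  · exact eventually_lt_of_dim_scaled_le hD hS hSI ha ha' heq hδ₀ (fun X hX => (hη X hX).1) hc
end
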